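/- arXiv:2510.10869 — 6 statements merged into one kernel-verified Lean document; each statement's English description precedes it below -/
import Mathlib

section
/- For every integer n > 2 and every subset S of F_2^n, the number of distinct Hamming distances spanned by pairs of points of S is at least log|S| / (2 log n). -/
/-!
Polynomial method. Let `D` be the set of nonzero distances in `S`. For `y ∈ S` the function
`f_y x = ∏ d ∈ D, (d_H(x, y) - d)` vanishes at every other point of `S` but not at `y`, so these
functions are linearly independent. Since `d_H(x, y)` is an affine function of the coordinates
`x i`, each `f_y` is a linear combination of products of `|D|` functions among
`1, x 0, …, x (n - 1)`, so `|S| ≤ (n + 1) ^ |D| ≤ n ^ (2 |D|)`.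
-/

open Finset
open scoped Pointwise

namespace Submodule

variable {R A ι : Type*} [CommSemiring R] [CommSemiring A] [Algebra R A]

theorem prod_mem_pow (M : Submodule R A) {s : Finset ι} {x : ι → A}
    (hx : ∀ i ∈ s, x i ∈ M) : ∏ i ∈ s, x i ∈ M ^ #s := by
  have hprod := Set.finsetProd_mem_finsetProd s (fun _ => (M : Set A)) x hx
  rw [Finset.prod_const] at hprod
  exact pow_eq_span_pow_set M #s ▸ subset_span hprod

end Submodule

theorem linearIndependent_of_apply_eq_zero_of_ne {K X ι : Type*} [Ring K] [NoZeroDivisors K]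
    (f : ι → X → K) (p : ι → X) (hdiag : ∀ i, f i (p i) ≠ 0)
    (hoff : ∀ i j, i ≠ j → f i (p j) = 0) :
    LinearIndependent K f := by
  classical
  refine linearIndependent_iff'.2 fun s c hsum j hj => ?_
  have heval := congrFun hsum (p j)
  simp only [Finset.sum_apply, Pi.smul_apply, smul_eq_mul, Pi.zero_apply] at heval
  rw [Finset.sum_eq_single j (fun i _ hij => by rw [hoff i j hij, mul_zero]) (absurd hj)] at heval
  exact (mul_eq_zero.1 heval).resolve_right (hdiag j)

section HammingCube

variable {K : Type*} {n : ℕ}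

open Classical in
noncomputable def coordFns (K : Type*) [Zero K] [One K] (n : ℕ) :
    Finset ((Fin n → ZMod 2) → K) :=
  insert 1 (univ.image fun i x => if x i = 1 then 1 else 0)

theorem card_coordFns_le [Zero K] [One K] : #(coordFns K n) ≤ n + 1 := by
  classical
  exact (card_insert_le _ _).trans (Nat.succ_le_succ (card_image_le.trans (card_fin n).le))

theorem ite_ne_mem_span_coordFns [CommRing K] (y : Fin n → ZMod 2) (i : Fin n) :
    (fun x : Fin n → ZMod 2 => if x i ≠ y i then (1 : K) else 0) ∈
      Submodule.span K (coordFns K n : Set ((Fin n → ZMod 2) → K)) := by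
  set e : (Fin n → ZMod 2) → K := fun x => if x i = 1 then 1 else 0
  have he : e ∈ Submodule.span K (coordFns K n : Set ((Fin n → ZMod 2) → K)) :=
    Submodule.subset_span (by simp [coordFns, e])
  have hone : (1 : (Fin n → ZMod 2) → K) ∈ Submodule.span K (coordFns K n : Set _) :=
    Submodule.subset_span (by simp [coordFns])
  -- over `𝔽₂`, `[a ≠ b] = [a = 1] + [b = 1] (1 - 2 [a = 1])`
  have hfun : (fun x : Fin n → ZMod 2 => if x i ≠ y i then (1 : K) else 0) =
      e + (if y i = 1 then (1 : K) else 0) • (1 - (2 : K) • e) := by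
    funext x
    have hcases : ∀ a : ZMod 2, a = 0 ∨ a = 1 := by decide
    rcases hcases (x i) with hx | hx <;> rcases hcases (y i) with hy | hy <;>
      norm_num [e, hx, hy]
  rw [hfun]
  exact add_mem he (Submodule.smul_mem _ _ (sub_mem hone (Submodule.smul_mem _ _ he)))

theorem hammingDist_sub_mem_span_coordFns [CommRing K] (y : Fin n → ZMod 2) (d : K) :
    (fun x : Fin n → ZMod 2 => (hammingDist x y : K) - d) ∈
      Submodule.span K (coordFns K n : Set ((Fin n → ZMod 2) → K)) := by
  have hfun : (fun x : Fin n → ZMod 2 => (hammingDist x y : K) - d) =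
      (∑ i, fun x : Fin n → ZMod 2 => if x i ≠ y i then (1 : K) else 0) - d • 1 := by
    funext x
    simp [hammingDist, Finset.natCast_card_filter]
  rw [hfun]
  exact sub_mem (sum_mem fun i _ => ite_ne_mem_span_coordFns y i)
    (Submodule.smul_mem _ _ (Submodule.subset_span (by simp [coordFns])))

end HammingCube

theorem card_le_succ_pow_of_hammingDist_mem {n : ℕ} {S : Finset (Fin n → ZMod 2)}
    {D : Finset ℕ} (h0 : 0 ∉ D)
    (hD : ∀ x ∈ S, ∀ y ∈ S, x ≠ y → hammingDist x y ∈ D) :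
    #S ≤ (n + 1) ^ #D := by
  let f : (Fin n → ZMod 2) → (Fin n → ZMod 2) → ℚ := fun y =>
    ∏ d ∈ D, fun x => (hammingDist x y : ℚ) - d
  have hf : ∀ x y, f y x = ∏ d ∈ D, ((hammingDist x y : ℚ) - d) := fun x y =>
    Finset.prod_apply x D _
  have hli : LinearIndependent ℚ fun y : S => f y := by
    refine linearIndependent_of_apply_eq_zero_of_ne _ Subtype.val (fun y => ?_) fun y z hyz => ?_
    · rw [hf, hammingDist_self]
      exact prod_ne_zero_iff.2 fun d hd => by
        simpa [sub_eq_zero, eq_comm] using ne_of_mem_of_not_mem hd h0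
    · rw [hf]
      exact prod_eq_zero (hD z z.2 y y.2 fun h => hyz (Subtype.ext h).symm) (sub_self _)
  have hspan : Set.range (fun y : S => f y) ≤
      Submodule.span ℚ (↑(coordFns ℚ n ^ #D) : Set ((Fin n → ZMod 2) → ℚ)) := by
    rintro _ ⟨y, rfl⟩
    rw [coe_pow, ← Submodule.span_pow]
    exact Submodule.prod_mem_pow _ fun d _ =>
      hammingDist_sub_mem_span_coordFns (y : Fin n → ZMod 2) (d : ℚ)
  have hcard := linearIndependent_le_span' _ hli _ hspan
  simp only [Cardinal.mk_coe_finset, Finset.coe_sort_coe, Fintype.card_coe, Nat.cast_le] at hcard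
  calc #S ≤ #(coordFns ℚ n ^ #D) := hcard
    _ ≤ #(coordFns ℚ n) ^ #D := card_pow_le
    _ ≤ (n + 1) ^ #D := Nat.pow_le_pow_left card_coordFns_le _

/-- For every integer `n > 2` and every `S ⊆ 𝔽₂ⁿ`, the number of distinct
Hamming distances spanned by pairs of points of `S` is at least `log |S| / (2 log n)`. -/
theorem stmt0 (n : ℕ) (hn : 2 < n) (S : Finset (Fin n → ZMod 2)) :
    Real.logb 2 S.card / (2 * Real.logb 2 n) ≤
      (((S ×ˢ S).image fun p => hammingDist p.1 p.2).card : ℝ) := by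
  classical
  set Δ := (S ×ˢ S).image fun p => hammingDist p.1 p.2
  have hcard : #S ≤ n ^ (2 * #Δ) := calc
    #S ≤ (n + 1) ^ #(Δ.erase 0) :=
      card_le_succ_pow_of_hammingDist_mem (notMem_erase 0 Δ) fun x hx y hy hxy =>
        mem_erase.2 ⟨hammingDist_ne_zero.2 hxy, mem_image_of_mem _ (mk_mem_product hx hy)⟩
    _ ≤ (n ^ 2) ^ #Δ := pow_le_pow (by nlinarith) (by nlinarith) card_erase_le
    _ = n ^ (2 * #Δ) := (pow_mul n 2 #Δ).symm
  rcases S.eq_empty_or_nonempty with rfl | hS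
  · simp
  have hlogn : 0 < Real.logb 2 n :=
    Real.logb_pos (by norm_num) (by exact_mod_cast hn.trans' one_lt_two)
  rw [div_le_iff₀ (by positivity)]
  calc Real.logb 2 #S ≤ Real.logb 2 ((n : ℝ) ^ (2 * #Δ)) :=
        Real.logb_le_logb_of_le (by norm_num) (by exact_mod_cast hS.card_pos)
          (by exact_mod_cast hcard)
    _ = #Δ * (2 * Real.logb 2 n) := by rw [Real.logb_pow]; push_cast; ring
end

section
/- For every integer q ≥ 2, every integer n ≥ 1, and every subset S of [q]^n, the number of distinct Hamming distances spanned by S is at least log|S| / (2 log(2nq)). -/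
open Finset Module Submodule

/-! Polynomial method. Let `D` be the set of nonzero distances occurring in `S`. For `y ∈ S`
the function `f_y x = ∏_{d ∈ D} (d - d_H(x, y))` vanishes on `S \ {y}` but not at `y`, so the
`f_y` are linearly independent. Each factor is a combination of the constant `1` and the `nq`
indicators `[x i ≠ a]`, so every `f_y` lies in the span of the `(nq + 1)^|D|` products of `|D|`
such functions. Hence `|S| ≤ (nq + 1)^|D| ≤ (2nq)^|Δ(S)|`, and the bound follows by taking
logarithms. -/

theorem Finset.card_le_finrank_of_separating {X K : Type*} [Field K] (S : Finset X)
    (f : X → X → K) (W : Submodule K (X → K)) [FiniteDimensional K W]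
    (hfW : ∀ y ∈ S, f y ∈ W) (hdiag : ∀ y ∈ S, f y y ≠ 0)
    (hoff : ∀ y ∈ S, ∀ z ∈ S, z ≠ y → f y z = 0) :
    S.card ≤ finrank K W := by
  have hli : LinearIndependent K fun y : S => f y := by
    rw [Fintype.linearIndependent_iff]
    intro c hc y
    have hy := congrFun hc y
    simp only [Finset.sum_apply, Pi.smul_apply, smul_eq_mul, Pi.zero_apply] at hy
    rwa [Finset.sum_eq_single y (fun z _ hzy => by
        rw [hoff z z.2 y y.2 fun h => hzy (Subtype.ext h.symm), mul_zero])
      (by simp), mul_eq_zero, or_iff_left (hdiag y y.2)] at hy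
  calc S.card = finrank K (span K (Set.range fun y : S => f y)) := by
        rw [finrank_span_eq_card hli, Fintype.card_coe]
    _ ≤ finrank K W := Submodule.finrank_mono <| span_le.mpr <| by
        rintro _ ⟨y, rfl⟩
        exact hfW y y.2

theorem Submodule.prod_mem_span_range_prod {K A ι κ : Type*} [CommSemiring K] [CommSemiring A]
    [Algebra K A] [Fintype ι] [Fintype κ] [DecidableEq κ] (b : ι → A) (f : κ → A)
    (hf : ∀ j, f j ∈ span K (Set.range b)) :
    ∏ j, f j ∈ span K (Set.range fun σ : κ → ι => ∏ j, b (σ j)) := by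
  choose c hc using fun j => (mem_span_range_iff_exists_fun K).mp (hf j)
  rw [← Finset.prod_congr rfl fun j _ => hc j, Fintype.prod_sum]
  refine sum_mem fun σ _ => ?_
  rw [Finset.prod_smul]
  exact smul_mem _ _ (subset_span ⟨σ, rfl⟩)

section Hamming

variable {ι α : Type*} [Fintype ι] [DecidableEq α]

def hammingCoord : Option (ι × α) → (ι → α) → ℝ
  | none => 1
  | some (i, a) => fun x => if x i ≠ a then 1 else 0

theorem natCast_hammingDist_eq_sum (x y : ι → α) :
    (hammingDist x y : ℝ) = ∑ i, hammingCoord (some (i, y i)) x := by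
  simp [hammingDist, hammingCoord, Finset.natCast_card_filter]

theorem sub_hammingDist_mem_span (d : ℕ) (y : ι → α) :
    (fun x => (d : ℝ) - hammingDist x y) ∈
      span ℝ (Set.range (hammingCoord (ι := ι) (α := α))) := by
  have hsum : (fun x => (hammingDist x y : ℝ)) = ∑ i, hammingCoord (some (i, y i)) := by
    funext x
    rw [natCast_hammingDist_eq_sum, Finset.sum_apply]
  have hconst : (fun _ => (d : ℝ)) = (d : ℝ) • hammingCoord (ι := ι) (α := α) none := by
    funext x
    simp [hammingCoord]
  change (fun _ => (d : ℝ)) - (fun x => (hammingDist x y : ℝ)) ∈ _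
  rw [hsum, hconst]
  exact sub_mem (smul_mem _ _ (subset_span ⟨_, rfl⟩))
    (sum_mem fun i _ => subset_span ⟨_, rfl⟩)

theorem card_le_of_hammingDist_mem [Fintype α] (S : Finset (ι → α)) (D : Finset ℕ)
    (h0 : 0 ∉ D) (hD : ∀ x ∈ S, ∀ y ∈ S, x ≠ y → hammingDist x y ∈ D) :
    S.card ≤ (Fintype.card ι * Fintype.card α + 1) ^ D.card := by
  let f : (ι → α) → (ι → α) → ℝ := fun y => ∏ d : D, fun x => (d : ℝ) - hammingDist x y
  have hf : ∀ y x, f y x = ∏ d ∈ D, ((d : ℝ) - hammingDist x y) := fun y x => by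
    simp only [f, Finset.prod_apply]
    exact Finset.prod_coe_sort D fun d => (d : ℝ) - hammingDist x y
  let W := span ℝ (Set.range fun σ : D → Option (ι × α) => ∏ d, hammingCoord (σ d))
  calc S.card ≤ finrank ℝ W := by
        refine S.card_le_finrank_of_separating f W
          (fun y _ => prod_mem_span_range_prod _ _ fun d => sub_hammingDist_mem_span d y)
          (fun y _ => ?_) (fun y hy z hz hzy => ?_)
        · rw [hf, hammingDist_self, Nat.cast_zero]
          exact prod_ne_zero_iff.mpr fun d hd => by
            simpa using fun h : d = 0 => h0 (h ▸ hd)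
        · rw [hf]
          exact prod_eq_zero (hD z hz y hy hzy) (sub_self _)
    _ ≤ Fintype.card (D → Option (ι × α)) := finrank_range_le_card _
    _ = (Fintype.card ι * Fintype.card α + 1) ^ D.card := by
        simp [Fintype.card_option, Fintype.card_prod]

end Hamming

theorem Real.logb_natCast_le_mul_logb_of_le_pow {b : ℝ} (hb : 1 < b) {m B k : ℕ}
    (h : m ≤ B ^ k) : Real.logb b m ≤ k * Real.logb b B := by
  rcases Nat.eq_zero_or_pos m with rfl | hm
  · rw [Nat.cast_zero, Real.logb_zero]
    exact mul_nonneg k.cast_nonneg (div_nonneg (Real.log_natCast_nonneg B) (Real.log_nonneg hb.le))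
  · rw [← Real.logb_pow]
    exact Real.logb_le_logb_of_le hb (by exact_mod_cast hm) (by exact_mod_cast h)

theorem stmt1_general (q n : ℕ) (S : Finset (Fin n → Fin q)) :
    Real.logb 2 S.card / (2 * Real.logb 2 (2 * n * q)) ≤
      (((S ×ˢ S).image fun p => hammingDist p.1 p.2).card : ℝ) := by
  set Δ := (S ×ˢ S).image fun p => hammingDist p.1 p.2
  rcases Nat.eq_zero_or_pos (n * q) with hnq | hnq
  · -- the denominator is `2 * logb 2 0 = 0`, and division by zero gives `0`
    have hzero : (2 * n * q : ℝ) = 0 := by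
      rw [mul_assoc]
      exact_mod_cast (by simp [hnq] : 2 * (n * q) = 0)
    simp [hzero]
  have h2nq : 2 * n * q = 2 * (n * q) := Nat.mul_assoc ..
  have hcard : S.card ≤ (2 * n * q) ^ Δ.card :=
    calc S.card ≤ (n * q + 1) ^ (Δ.erase 0).card := by
          simpa using card_le_of_hammingDist_mem S (Δ.erase 0) (notMem_erase 0 Δ)
            fun x hx y hy hxy => mem_erase.mpr ⟨hammingDist_ne_zero.mpr hxy,
              mem_image.mpr ⟨(x, y), mem_product.mpr ⟨hx, hy⟩, rfl⟩⟩
      _ ≤ (2 * n * q) ^ Δ.card := pow_le_pow (by omega) (by omega) card_erase_le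
  have hlog := Real.logb_natCast_le_mul_logb_of_le_pow one_lt_two hcard
  have hpos : 0 < Real.logb 2 (2 * n * q : ℕ) :=
    Real.logb_pos one_lt_two (by exact_mod_cast (by omega : 1 < 2 * n * q))
  push_cast at hlog hpos
  rw [div_le_iff₀ (by positivity)]
  nlinarith [Δ.card.cast_nonneg (α := ℝ)]

/-- For every `q ≥ 2`, `n ≥ 1`, and `S ⊆ [q]ⁿ`, the number of distinct
Hamming distances spanned by `S` is at least `log |S| / (2 log (2 n q))`. -/
theorem stmt1 (q n : ℕ) (hq : 2 ≤ q) (hn : 1 ≤ n) (S : Finset (Fin n → Fin q)) :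
    Real.logb 2 S.card / (2 * Real.logb 2 (2 * n * q)) ≤
      (((S ×ˢ S).image fun p => hammingDist p.1 p.2).card : ℝ) :=
  stmt1_general q n S
end

section
/- For any prime power q, any constant k, and any n ≥ k, there exists a set S ⊆ F_q^n with |S| = Θ((n/k)^k) such that S spans at most k distinct nonzero Hamming distances. -/
/-!
Split `k * ⌊n / k⌋` of the `n` coordinates into `k` blocks of size `m = ⌊n / k⌋` and, for each
`a : Fin k → Fin m`, take the 0/1 vector that marks coordinate `a i` in block `i`. Two such
vectors differ in exactly `2 * #{i | a i ≠ b i}` coordinates, so their nonzero distances lie in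
`{2, 4, …, 2k}`, while there are `m ^ k ≥ (n / (2k)) ^ k` of them.
-/

open Finset Function

def nonzeroDistances {ι β : Type*} [Fintype ι] [DecidableEq β] (S : Finset (ι → β)) :
    Finset ℕ :=
  ((S ×ˢ S).image fun p => hammingDist p.1 p.2) \ {0}

section Distances

variable {ι κ β γ : Type*} [Fintype ι] [DecidableEq β] [Fintype κ] [DecidableEq γ]

theorem card_nonzeroDistances_le (S : Finset (ι → β)) :
    (nonzeroDistances S).card ≤ Fintype.card ι := by
  calc (nonzeroDistances S).card ≤ (Icc 1 (Fintype.card ι)).card := by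
        refine card_le_card fun d hd => ?_
        simp only [nonzeroDistances, mem_sdiff, mem_image, mem_singleton] at hd
        obtain ⟨⟨p, -, rfl⟩, hd0⟩ := hd
        exact mem_Icc.2 ⟨Nat.one_le_iff_ne_zero.2 hd0, hammingDist_le_card_fintype⟩
    _ = Fintype.card ι := by simp

variable {Φ : (ι → β) → κ → γ} {c : ℕ}

theorem card_nonzeroDistances_image_le
    (hΦ : ∀ x y, hammingDist (Φ x) (Φ y) = c * hammingDist x y) (S : Finset (ι → β)) :
    (nonzeroDistances (S.image Φ)).card ≤ (nonzeroDistances S).card := by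
  calc (nonzeroDistances (S.image Φ)).card ≤ ((nonzeroDistances S).image (c * ·)).card := by
        refine card_le_card fun d hd => ?_
        simp only [nonzeroDistances, mem_sdiff, mem_image, mem_product, mem_singleton,
          Prod.exists] at hd ⊢
        obtain ⟨⟨_, _, ⟨⟨x, hx, rfl⟩, y, hy, rfl⟩, rfl⟩, hd0⟩ := hd
        rw [hΦ] at hd0 ⊢
        exact ⟨_, ⟨⟨x, y, ⟨hx, hy⟩, rfl⟩, right_ne_zero_of_mul hd0⟩, rfl⟩
    _ ≤ (nonzeroDistances S).card := card_image_le

theorem injective_of_hammingDist_eq_mul (hc : c ≠ 0)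
    (hΦ : ∀ x y, hammingDist (Φ x) (Φ y) = c * hammingDist x y) : Injective Φ := fun x y h => by
  simpa [hΦ, hc] using hammingDist_eq_zero.2 h

end Distances

section GraphIndicator

variable {ι κ α : Type*} [Fintype ι] [Fintype κ] [DecidableEq κ] [Zero α] [One α]
  [DecidableEq α]

def graphIndicator (a : ι → κ) : ι × κ → α := fun x => if a x.1 = x.2 then 1 else 0

theorem hammingDist_graphIndicator [NeZero (1 : α)] (a b : ι → κ) :
    hammingDist (graphIndicator (α := α) a) (graphIndicator b) = 2 * hammingDist a b := by
  have fiber (i : ι) : #{p | graphIndicator (α := α) a (i, p) ≠ graphIndicator b (i, p)} =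
      if a i ≠ b i then 2 else 0 := by
    split_ifs with h
    · rw [← card_pair h]
      congr 1
      ext p
      simp only [graphIndicator, mem_insert, mem_singleton]
      grind [one_ne_zero]
    · simp_all [graphIndicator]
  rw [hammingDist, card_filter, Fintype.sum_prod_type]
  simp only [← card_filter, fiber]
  rw [hammingDist, card_filter, mul_sum]
  congr! 1 with i
  split_ifs <;> rfl

end GraphIndicator

section Padding

variable {ι κ α : Type*} [Fintype ι] [Fintype κ] [Zero α] [DecidableEq α]

theorem hammingDist_extend_zero {e : ι → κ} (he : Injective e) (x y : ι → α) :
    hammingDist (extend e x 0) (extend e y 0) = hammingDist x y := by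
  classical
  have : ({j | extend e x 0 j ≠ extend e y 0 j} : Finset κ) = image e {i | x i ≠ y i} := by
    ext j
    by_cases hj : ∃ i, e i = j
    · obtain ⟨i, rfl⟩ := hj
      simp [he.extend_apply, he.eq_iff]
    · simp only [not_exists] at hj
      simp [hj]
  rw [hammingDist, this, card_image_of_injective _ he, hammingDist]

end Padding

theorem div_le_two_mul_natDiv {n k : ℕ} (h : k ≤ n) : (n : ℝ) / k ≤ 2 * (n / k : ℕ) := by
  rcases Nat.eq_zero_or_pos k with rfl | hk
  · simp
  have hm : 1 ≤ n / k := (Nat.one_le_div_iff hk).2 h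
  calc (n : ℝ) / k ≤ (n / k : ℕ) + 1 := by
        rw [← Nat.floor_div_eq_div (K := ℝ)]; exact (Nat.lt_floor_add_one _).le
    _ ≤ 2 * (n / k : ℕ) := by
        have : (1 : ℝ) ≤ (n / k : ℕ) := by exact_mod_cast hm
        linarith

theorem stmt6_general (q k : ℕ) (hq : IsPrimePow q) :
    ∃ c : ℝ, 0 < c ∧ ∀ n, k ≤ n → ∃ S : Finset (Fin n → Fin q),
      c * ((n : ℝ) / k) ^ k ≤ (S.card : ℝ) ∧
      ((((S ×ˢ S).image fun p => hammingDist p.1 p.2)) \ {0}).card ≤ k := by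
  obtain ⟨r, rfl⟩ : ∃ r, q = r + 2 := ⟨q - 2, by have := hq.two_le; omega⟩
  refine ⟨(1 / 2) ^ k, by positivity, fun n hn => ?_⟩
  set m := n / k
  let e : Fin k × Fin m → Fin n := Fin.castLE (Nat.mul_div_le n k) ∘ ⇑finProdFinEquiv
  have he : Injective e := (Fin.castLE_injective _).comp finProdFinEquiv.injective
  let Φ : (Fin k → Fin m) → Fin n → Fin (r + 2) := fun a => extend e (graphIndicator a) 0
  have hΦ a b : hammingDist (Φ a) (Φ b) = 2 * hammingDist a b := by
    rw [hammingDist_extend_zero he, hammingDist_graphIndicator]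
  refine ⟨univ.image Φ, ?_, ?_⟩
  · rw [card_image_of_injective _ (injective_of_hammingDist_eq_mul two_ne_zero hΦ),
      card_univ, Fintype.card_fun, Fintype.card_fin, Fintype.card_fin, Nat.cast_pow, ← mul_pow]
    gcongr
    linarith [div_le_two_mul_natDiv hn]
  · calc (nonzeroDistances (univ.image Φ)).card ≤ (nonzeroDistances univ).card :=
          card_nonzeroDistances_image_le hΦ univ
      _ ≤ k := by simpa using card_nonzeroDistances_le (univ : Finset (Fin k → Fin m))

/-- For any prime power `q` and constant `k ≥ 1`, there is `c > 0` such
that for every `n ≥ k` there exists `S ⊆ 𝔽_qⁿ` with `|S| ≥ c (n/k)^k` spanning at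
most `k` distinct nonzero Hamming distances. -/
theorem stmt6 (q k : ℕ) (hq : IsPrimePow q) (hk : 1 ≤ k) :
    ∃ c : ℝ, 0 < c ∧ ∀ n, k ≤ n → ∃ S : Finset (Fin n → Fin q),
      c * ((n : ℝ) / k) ^ k ≤ (S.card : ℝ) ∧
      ((((S ×ˢ S).image fun p => hammingDist p.1 p.2)) \ {0}).card ≤ k :=
  stmt6_general q k hq
end

section
/- For each n ≥ 2, the set A = {a_1,...,a_{n+1}} ⊆ [n+1]^n (where (a_i)_j = i - j if j ≤ i and 0 otherwise) contains no rainbow subset of size 3: every subset R ⊆ A in which all pairwise Hamming distances are distinct has |R| ≤ 2. -/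
/-- The staircase vector `a_i ∈ [n+1]^n`. -/
def staircase (n i : ℕ) : Fin n → Fin (n + 1) :=
  fun j => if (j : ℕ) + 1 ≤ i then Fin.ofNat (n + 1) (i - ((j : ℕ) + 1) : ℕ) else 0

/-- A set is rainbow if all pairwise Hamming distances among distinct points are
distinct: equal distances can only come from the same unordered pair. -/
def IsRainbow {α : Type*} [DecidableEq α] {n : ℕ} (R : Finset (Fin n → α)) : Prop :=
  ∀ x ∈ R, ∀ y ∈ R, ∀ u ∈ R, ∀ v ∈ R, x ≠ y → u ≠ v →
    hammingDist x y = hammingDist u v → ({x, y} : Finset (Fin n → α)) = {u, v}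

/-! Two distinct points of the staircase differ exactly in the coordinates `j < k - 1`, where
`k` is the larger index, so their distance is determined by the larger index alone. In a
rainbow set of three or more such points, the two with smaller index would then be equidistant
from the one with the largest index. -/

lemma staircase_val {n i : ℕ} (hi : i ≤ n + 1) (j : Fin n) :
    (staircase n i j : ℕ) = if (j : ℕ) + 1 ≤ i then i - ((j : ℕ) + 1) else 0 := by
  unfold staircase
  split_ifs
  · exact Nat.mod_eq_of_lt (by omega)
  · rfl

lemma staircase_ne_iff {n i k : ℕ} (hik : i < k) (hk : k ≤ n + 1) (j : Fin n) :
    staircase n i j ≠ staircase n k j ↔ (j : ℕ) < k - 1 := by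
  rw [Ne, Fin.ext_iff, staircase_val (by omega) j, staircase_val hk j]
  split_ifs <;> omega

lemma hammingDist_staircase {n i k : ℕ} (hik : i < k) (hk : k ≤ n + 1) :
    hammingDist (staircase n i) (staircase n k) = k - 1 := by
  simp only [hammingDist, staircase_ne_iff hik hk, Fin.card_filter_val_lt]
  omega

lemma IsRainbow.eq_of_hammingDist_eq {α : Type*} [DecidableEq α] {n : ℕ}
    {R : Finset (Fin n → α)} (hR : IsRainbow R) {x y z : Fin n → α}
    (hx : x ∈ R) (hy : y ∈ R) (hz : z ∈ R) (hxz : x ≠ z) (hyz : y ≠ z)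
    (h : hammingDist x z = hammingDist y z) : x = y := by
  have hpair := hR x hx z hz y hy z hz hxz hyz h
  have hmem : x ∈ ({y, z} : Finset (Fin n → α)) := hpair ▸ Finset.mem_insert_self x {z}
  simpa [hxz] using hmem

theorem IsRainbow.card_le_two_of_hammingDist_eq {α ι : Type*} [DecidableEq α] [LinearOrder ι]
    {n : ℕ} (f : ι → Fin n → α) (g : ι → ℕ) (s : Finset ι)
    (hfg : ∀ i ∈ s, ∀ k ∈ s, i < k → hammingDist (f i) (f k) = g k)
    {R : Finset (Fin n → α)} (hRs : R ⊆ s.image f) (hR : IsRainbow R) :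
    R.card ≤ 2 := by
  by_contra! hcard
  have hpre : ∀ x ∈ R, ∃ i ∈ s, f i = x := fun x hx => Finset.mem_image.mp (hRs hx)
  have hRne : R.Nonempty := Finset.card_pos.mp (by omega)
  have : Nonempty ι := let ⟨x, hx⟩ := hRne; let ⟨i, _⟩ := hpre x hx; ⟨i⟩
  choose! idx hidx hf_idx using hpre
  obtain ⟨z, hz, hz_max⟩ := R.exists_max_image idx hRne
  have hlt : ∀ x ∈ R.erase z, idx x < idx z := by
    intro x hx
    obtain ⟨hxz, hx⟩ := Finset.mem_erase.mp hx
    refine (hz_max x hx).lt_of_ne fun h => hxz ?_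
    rw [← hf_idx x hx, ← hf_idx z hz, h]
  have hdist : ∀ x ∈ R.erase z, hammingDist x z = g (idx z) := by
    intro x hx
    have hx' := Finset.mem_of_mem_erase hx
    simpa only [hf_idx x hx', hf_idx z hz] using hfg _ (hidx x hx') _ (hidx z hz) (hlt x hx)
  obtain ⟨x, hx, y, hy, hxy⟩ := Finset.one_lt_card.mp
    (by rw [Finset.card_erase_of_mem hz]; omega : 1 < (R.erase z).card)
  exact hxy <| hR.eq_of_hammingDist_eq (Finset.mem_of_mem_erase hx) (Finset.mem_of_mem_erase hy)
    hz (Finset.ne_of_mem_erase hx) (Finset.ne_of_mem_erase hy)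
    ((hdist x hx).trans (hdist y hy).symm)

theorem stmt11_general (n : ℕ)
    (R : Finset (Fin n → Fin (n + 1)))
    (hRA : R ⊆ (Finset.Icc 1 (n + 1)).image (staircase n))
    (hR : IsRainbow R) :
    R.card ≤ 2 :=
  hR.card_le_two_of_hammingDist_eq (staircase n) (· - 1) _
    (fun _ _ _ hk hik => hammingDist_staircase hik (Finset.mem_Icc.mp hk).2) hRA

/-- for `n ≥ 2`, the set `A = {a_1, …, a_{n+1}}` contains no rainbow
subset of size 3: every rainbow `R ⊆ A` has `|R| ≤ 2`. -/
theorem stmt11 (n : ℕ) (hn : 2 ≤ n)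
    (R : Finset (Fin n → Fin (n + 1)))
    (hRA : R ⊆ (Finset.Icc 1 (n + 1)).image (staircase n))
    (hR : IsRainbow R) :
    R.card ≤ 2 :=
  stmt11_general n R hRA hR
end

section
/- For every ε > 0 and all sufficiently large n, there exists a rainbow set R ⊆ F_2^n of size at least (1/√2 − ε)√n, i.e., a set in which all pairwise Hamming distances are distinct. -/
open Finset

def IsSidon {G : Type*} [Add G] (S : Finset G) : Prop :=
  ∀ a ∈ S, ∀ b ∈ S, ∀ c ∈ S, ∀ d ∈ S, a + b = c + d → (a = c ∧ b = d) ∨ (a = d ∧ b = c)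

theorem IsSidon.eq_and_eq_of_sub_eq {G : Type*} [AddCommGroup G] {S : Finset G} (hS : IsSidon S)
    {a b c d : G} (ha : a ∈ S) (hb : b ∈ S) (hc : c ∈ S) (hd : d ∈ S) (hab : a ≠ b)
    (h : a - b = c - d) : a = c ∧ b = d := by
  rcases hS a ha d hd c hc b hb (by rw [sub_eq_sub_iff_add_eq_add] at h; exact h) with h' | h'
  · exact ⟨h'.1, h'.2.symm⟩
  · exact absurd h'.1 hab

theorem eq_and_eq_or_eq_and_eq_of_add_eq_of_mul_eq {R : Type*} [CommRing R] [IsDomain R]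
    {a b c d : R} (hs : a + b = c + d) (hp : a * b = c * d) :
    (a = c ∧ b = d) ∨ (a = d ∧ b = c) := by
  have : (a - c) * (a - d) = 0 := by linear_combination a * hs - hp
  rcases mul_eq_zero.mp this with h | h
  · exact Or.inl ⟨sub_eq_zero.mp h, by linear_combination hs - h⟩
  · exact Or.inr ⟨sub_eq_zero.mp h, by linear_combination hs - h⟩

theorem eq_and_eq_or_eq_and_eq_of_add_algebraMap_mul_eq {F K : Type*} [Field F] [CommRing K]
    [Nontrivial K] [Algebra F K] {θ : K} (hθ : θ ∉ Set.range (algebraMap F K)) {a b c d : F}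
    (h : (θ + algebraMap F K a) * (θ + algebraMap F K b) =
      (θ + algebraMap F K c) * (θ + algebraMap F K d)) :
    (a = c ∧ b = d) ∨ (a = d ∧ b = c) := by
  set A := algebraMap F K
  have hlin : θ * A (a + b - (c + d)) = A (c * d - a * b) := by
    simp only [map_sub, map_add, map_mul]; linear_combination h
  have hs : a + b = c + d := by
    by_contra hs
    -- otherwise `θ` would be the quotient `(cd - ab) / (a + b - c - d)` of two elements of `F`
    refine hθ ⟨(a + b - (c + d))⁻¹ * (c * d - a * b), ?_⟩
    have hinv : A (a + b - (c + d))⁻¹ * A (a + b - (c + d)) = 1 := by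
      rw [← map_mul, inv_mul_cancel₀ (sub_ne_zero.mpr hs), map_one]
    rw [map_mul, ← hlin]
    linear_combination θ * hinv
  refine eq_and_eq_or_eq_and_eq_of_add_eq_of_mul_eq hs (A.injective ?_)
  simp only [hs, sub_self, map_zero, mul_zero, map_sub] at hlin
  exact (sub_eq_zero.mp hlin.symm).symm

theorem exists_isSidon_card_eq_of_prime (q : ℕ) [Fact q.Prime] :
    ∃ S : Finset (ZMod (q ^ 2 - 1)), IsSidon S ∧ S.card = q := by
  let K := GaloisField q 2
  have hK : Nat.card K = q ^ 2 := GaloisField.card q 2 two_ne_zero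
  obtain ⟨g, hg⟩ := IsCyclic.exists_generator (α := Kˣ)
  let e := zmodMulEquivOfGenerator hg (by rw [Nat.card_units, hK])
  obtain ⟨θ, hθ⟩ : ∃ θ : K, θ ∉ Set.range (algebraMap (ZMod q) K) := by
    by_contra! hsurj
    have := Nat.card_le_card_of_surjective _ hsurj
    rw [hK, Nat.card_zmod] at this
    have := (Fact.out : q.Prime).one_lt
    nlinarith
  have hne (r : ZMod q) : θ + algebraMap (ZMod q) K r ≠ 0 := fun h =>
    hθ ⟨-r, by rw [map_neg]; linear_combination -h⟩
  -- discrete logarithms of the elements `θ + r`, `r` in the prime field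
  let f (r : ZMod q) : ZMod (q ^ 2 - 1) := (e.symm (Units.mk0 _ (hne r))).toAdd
  have hf (r : ZMod q) : (e (.ofAdd (f r)) : K) = θ + algebraMap (ZMod q) K r := by simp [f]
  have hfadd (r s : ZMod q) :
      (e (.ofAdd (f r + f s)) : K) = (θ + algebraMap _ K r) * (θ + algebraMap _ K s) := by
    rw [ofAdd_add, map_mul, Units.val_mul, hf, hf]
  have hfinj : Function.Injective f := fun r s hrs => by
    simpa [hf] using congrArg (fun x => (e (.ofAdd x) : K)) hrs
  refine ⟨univ.image f, ?_, by rw [card_image_of_injective _ hfinj, card_univ, ZMod.card]⟩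
  simp only [IsSidon, forall_mem_image]
  intro a _ b _ c _ d _ h
  have hprod : (θ + algebraMap _ K a) * (θ + algebraMap _ K b) =
      (θ + algebraMap _ K c) * (θ + algebraMap _ K d) := by
    rw [← hfadd, ← hfadd, h]
  rcases eq_and_eq_or_eq_and_eq_of_add_algebraMap_mul_eq hθ hprod with ⟨rfl, rfl⟩ | ⟨rfl, rfl⟩
  · exact Or.inl ⟨rfl, rfl⟩
  · exact Or.inr ⟨rfl, rfl⟩

/-- The `a`-th vertex of the walk `0ʰ → 1ʰ → 0ʰ` along the cube, padded with zeros to length `n`. -/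
def arcVec (h n a : ℕ) : Fin n → ZMod 2 := fun t =>
  if (t : ℕ) < h ∧ (t : ℕ) < a ∧ a ≤ t + h then 1 else 0

theorem card_filter_arc_symmDiff {h a b : ℕ} (hab : a ≤ b) (hb : b ≤ 2 * h) :
    #{t ∈ range h | ¬((t < a ∧ a ≤ t + h) ↔ (t < b ∧ b ≤ t + h))} =
      min (b - a) (2 * h - (b - a)) := by
  rcases le_or_gt (b - a) h with hd | hd
  · have hset : {t ∈ range h | ¬((t < a ∧ a ≤ t + h) ↔ (t < b ∧ b ≤ t + h))} =
        Ico (a - h) (b - h) ∪ Ico a (min b h) := by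
      ext t; simp only [mem_filter, mem_range, mem_union, mem_Ico]; omega
    rw [hset, card_union_of_disjoint (disjoint_left.2 fun t h₁ h₂ => by
      simp only [mem_Ico] at h₁ h₂; omega), Nat.card_Ico, Nat.card_Ico]
    omega
  · have hset : {t ∈ range h | ¬((t < a ∧ a ≤ t + h) ↔ (t < b ∧ b ≤ t + h))} =
        Ico 0 a ∪ Ico (b - h) h := by
      ext t; simp only [mem_filter, mem_range, mem_union, mem_Ico]; omega
    rw [hset, card_union_of_disjoint (disjoint_left.2 fun t h₁ h₂ => by
      simp only [mem_Ico] at h₁ h₂; omega), Nat.card_Ico, Nat.card_Ico]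
    omega

theorem arcVec_apply_ne_iff {h n a b : ℕ} (t : Fin n) :
    arcVec h n a t ≠ arcVec h n b t ↔
      (t : ℕ) < h ∧ ¬(((t : ℕ) < a ∧ a ≤ t + h) ↔ ((t : ℕ) < b ∧ b ≤ t + h)) := by
  unfold arcVec
  split_ifs <;>
    simp only [ne_eq, not_true_eq_false, one_ne_zero, zero_ne_one, not_false_eq_true, true_iff,
      false_iff, not_and, Decidable.not_not] <;> omega

theorem hammingDist_arcVec {h n a b : ℕ} (hn : h ≤ n) (hab : a ≤ b) (hb : b ≤ 2 * h) :
    hammingDist (arcVec h n a) (arcVec h n b) = min (b - a) (2 * h - (b - a)) := by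
  rw [← card_filter_arc_symmDiff hab hb, hammingDist, ← card_image_of_injective _ Fin.val_injective]
  congr 1
  ext t
  simp only [mem_image, mem_filter, mem_univ, true_and, mem_range, arcVec_apply_ne_iff]
  exact ⟨by rintro ⟨t, ht, rfl⟩; exact ht, fun ht => ⟨⟨t, by omega⟩, ht, rfl⟩⟩

section Cyclic

variable {N h n : ℕ} [NeZero N]

theorem hammingDist_arcVec_val (hN : N = 2 * h) (hn : h ≤ n) (a b : ZMod N) :
    hammingDist (arcVec h n a.val) (arcVec h n b.val) = min (a - b).val (N - (a - b).val) := by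
  subst hN
  have ha := ZMod.val_lt a
  have hb := ZMod.val_lt b
  rcases le_total b.val a.val with hba | hab
  · rw [hammingDist_comm, hammingDist_arcVec hn hba (by omega), ZMod.val_sub hba]
  · rcases eq_or_ne b a with rfl | hne
    · simp
    rw [hammingDist_arcVec hn hab (by omega), ← neg_sub, ZMod.neg_val, if_neg (sub_ne_zero.2 hne),
      ZMod.val_sub hab]
    omega

theorem ZMod.eq_or_eq_neg_of_min_val_eq {x y : ZMod N}
    (h : min x.val (N - x.val) = min y.val (N - y.val)) : x = y ∨ x = -y := by
  have hx := ZMod.val_lt x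
  have hy := ZMod.val_lt y
  rcases eq_or_ne y 0 with rfl | hy0
  · left
    simp only [ZMod.val_zero, Nat.zero_le, min_eq_left] at h
    exact (ZMod.val_eq_zero x).1 (by omega)
  by_cases hxy : x.val = y.val
  · exact Or.inl (ZMod.val_injective N hxy)
  · refine Or.inr (ZMod.val_injective N ?_)
    rw [ZMod.neg_val, if_neg hy0]
    omega

theorem sub_eq_sub_or_of_hammingDist_arcVec_eq (hN : N = 2 * h) (hn : h ≤ n) {a b c d : ZMod N}
    (hdist : hammingDist (arcVec h n a.val) (arcVec h n b.val) =
      hammingDist (arcVec h n c.val) (arcVec h n d.val)) :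
    a - b = c - d ∨ a - b = d - c := by
  rw [hammingDist_arcVec_val hN hn, hammingDist_arcVec_val hN hn] at hdist
  simpa only [neg_sub] using ZMod.eq_or_eq_neg_of_min_val_eq hdist

theorem arcVec_val_injective (hN : N = 2 * h) (hn : h ≤ n) :
    Function.Injective fun a : ZMod N => arcVec h n a.val := fun a b hab => by
  have := sub_eq_sub_or_of_hammingDist_arcVec_eq (c := b) (d := b) hN hn
    (congrArg (hammingDist · (arcVec h n b.val)) hab)
  simpa only [sub_self, or_self, sub_eq_zero] using this

theorem IsSidon.isRainbow_image_arcVec (hN : N = 2 * h) (hn : h ≤ n) {S : Finset (ZMod N)}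
    (hS : IsSidon S) : IsRainbow (S.image fun a => arcVec h n a.val) := by
  simp only [IsRainbow, forall_mem_image]
  intro a ha b hb c hc d hd hab _ hdist
  have hab' : a ≠ b := fun e => hab (by rw [e])
  rcases sub_eq_sub_or_of_hammingDist_arcVec_eq hN hn hdist with e | e
  · obtain ⟨rfl, rfl⟩ := hS.eq_and_eq_of_sub_eq ha hb hc hd hab' e
    rfl
  · obtain ⟨rfl, rfl⟩ := hS.eq_and_eq_of_sub_eq ha hb hd hc hab' e
    exact pair_comm _ _

end Cyclic

theorem exists_prime_three_le_sq_le_two_mul_lt (n : ℕ) (hn : 8 ≤ n) :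
    ∃ q, q.Prime ∧ 3 ≤ q ∧ q ^ 2 ≤ 2 * n ∧ n < 2 * q ^ 2 := by
  set s := Nat.sqrt (2 * n)
  have hs : s * s ≤ 2 * n := Nat.sqrt_le _
  have hs' : 2 * n < (s + 1) * (s + 1) := Nat.lt_succ_sqrt _
  have hs4 : 4 ≤ s := Nat.le_sqrt.2 (by omega)
  obtain ⟨q, hq, hlt, hle⟩ := Nat.exists_prime_lt_and_le_two_mul (s / 2) (by omega)
  have hqs : q ≤ s := by omega
  have hsq : s + 1 ≤ 2 * q := by omega
  exact ⟨q, hq, by omega, by nlinarith, by nlinarith⟩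

theorem one_div_sqrt_two_mul_sqrt_le {n q : ℕ} (h : n ≤ 2 * q ^ 2) :
    1 / √2 * √n ≤ q := by
  have : √n ≤ √2 * q :=
    calc √n ≤ √(2 * q ^ 2) := Real.sqrt_le_sqrt (by exact_mod_cast h)
      _ = √2 * q := by rw [Real.sqrt_mul zero_le_two, Real.sqrt_sq (Nat.cast_nonneg q)]
  rwa [one_div, inv_mul_le_iff₀ (by positivity)]

/-- for every `ε > 0` and all sufficiently large `n`, there exists a
rainbow set `R ⊆ 𝔽₂ⁿ` with `|R| ≥ (1/√2 - ε) √n`. -/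
theorem stmt14 (ε : ℝ) (hε : 0 < ε) :
    ∃ n₀ : ℕ, ∀ n ≥ n₀, ∃ R : Finset (Fin n → ZMod 2),
      IsRainbow R ∧ (1 / Real.sqrt 2 - ε) * Real.sqrt n ≤ (R.card : ℝ) := by
  refine ⟨8, fun n hn => ?_⟩
  obtain ⟨q, hq, hq3, hqn, hnq⟩ := exists_prime_three_le_sq_le_two_mul_lt n hn
  have : Fact q.Prime := ⟨hq⟩
  have : NeZero (q ^ 2 - 1) := ⟨by have := Nat.pow_le_pow_left hq3 2; omega⟩
  obtain ⟨h, hh⟩ : Even (q ^ 2 - 1) := Nat.Odd.sub_odd ((hq.odd_of_ne_two (by omega)).pow) odd_one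
  obtain ⟨S, hS, hcard⟩ := exists_isSidon_card_eq_of_prime q
  refine ⟨S.image fun a => arcVec h n a.val, hS.isRainbow_image_arcVec (by omega) (by omega), ?_⟩
  rw [card_image_of_injective _ (arcVec_val_injective (by omega) (by omega)), hcard]
  calc (1 / √2 - ε) * √n ≤ 1 / √2 * √n := by gcongr; linarith
    _ ≤ q := one_div_sqrt_two_mul_sqrt_le hnq.le
end

section
/- Let 0 < α ≤ 1 and S ⊆ F_2^n with |S| ≥ α·2^n. Then there exists a ∈ F_2^n and a chain C (under the coordinatewise partial order) contained in the translate S + a with |C| ≥ αn. -/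
open Finset
open scoped Pointwise

/-!
Fix one maximal chain `P` of `𝔽₂ⁿ`, of length `n + 1`. Each point of `P` lies in exactly `|S|` of
the `2ⁿ` translates of `S`, so some translate meets `P` in at least `(n + 1)|S| / 2ⁿ ≥ α n`
points, and that intersection is the required chain.
-/

section Averaging

variable {G : Type*} [AddCommGroup G] [DecidableEq G] [Fintype G]

theorem Finset.sum_addConvolution (A B : Finset G) :
    ∑ x : G, A.addConvolution B x = #A * #B := by
  rw [← card_product]
  exact (card_eq_sum_card_fiberwise fun _ _ => mem_univ _).symm

theorem Finset.sum_card_inter_vadd (P S : Finset G) :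
    ∑ a : G, #(P ∩ (a +ᵥ S)) = #P * #S := by
  simp only [card_inter_vadd, sum_addConvolution, card_neg]

theorem Finset.exists_card_mul_le_card_mul_card_inter_image_add (P S : Finset G) :
    ∃ a, #P * #S ≤ Fintype.card G * #(P ∩ S.image (· + a)) := by
  have hsum : ∑ _a : G, #P * #S = ∑ a : G, Fintype.card G * #(P ∩ (a +ᵥ S)) := by
    rw [sum_const, Finset.card_univ, smul_eq_mul, ← mul_sum, sum_card_inter_vadd]
  obtain ⟨a, -, ha⟩ := exists_le_of_sum_le univ_nonempty hsum.le
  refine ⟨a, ha.trans_eq ?_⟩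
  simp only [vadd_finset_def, vadd_eq_add, add_comm a]

end Averaging

section StandardChain

variable (R : Type*) [Zero R] [One R] (n : ℕ)

def prefixIndicator (k : ℕ) : Fin n → R := fun i => if (i : ℕ) < k then 1 else 0

variable {R n}

theorem prefixIndicator_injOn [NeZero (1 : R)] :
    Set.InjOn (prefixIndicator R n) (range (n + 1)) := by
  suffices ∀ k m, k < m → m ≤ n → prefixIndicator R n k ≠ prefixIndicator R n m by
    intro k hk m hm heq
    simp only [coe_range, Set.mem_Iio, Nat.lt_succ_iff] at hk hm
    by_contra hne
    rcases Nat.lt_or_gt_of_ne hne with h | h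
    · exact this k m h hm heq
    · exact this m k h hk heq.symm
  intro k m hkm hm heq
  have := congrFun heq ⟨k, by omega⟩
  simp [prefixIndicator, hkm] at this

theorem prefixIndicator_mono {k m : ℕ} (hkm : k ≤ m) (i : Fin n)
    (hi : prefixIndicator R n k i = 1) : prefixIndicator R n m i = 1 := by
  unfold prefixIndicator at hi ⊢
  split_ifs at hi ⊢ <;> first | rfl | omega

variable (R n) [DecidableEq R]

def standardChain : Finset (Fin n → R) := (range (n + 1)).image (prefixIndicator R n)

variable {R n}

theorem card_standardChain [NeZero (1 : R)] : #(standardChain R n) = n + 1 := by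
  rw [standardChain, card_image_of_injOn prefixIndicator_injOn, card_range]

theorem isChain_standardChain :
    IsChain (fun x y : Fin n → R => ∀ i, x i = 1 → y i = 1) (standardChain R n : Set _) := by
  rintro _ hx _ hy -
  obtain ⟨k, -, rfl⟩ := mem_image.mp (mem_coe.mp hx)
  obtain ⟨m, -, rfl⟩ := mem_image.mp (mem_coe.mp hy)
  rcases le_total k m with h | h
  · exact .inl (prefixIndicator_mono h)
  · exact .inr (prefixIndicator_mono h)

end StandardChain

theorem stmt17_general (n : ℕ) (α : ℝ)
    (S : Finset (Fin n → ZMod 2)) (hS : α * 2 ^ n ≤ (S.card : ℝ)) :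
    ∃ a : Fin n → ZMod 2, ∃ C : Finset (Fin n → ZMod 2),
      C ⊆ S.image (fun x => x + a) ∧
      IsChain (fun x y : Fin n → ZMod 2 => ∀ i, x i = 1 → y i = 1) (C : Set (Fin n → ZMod 2)) ∧
      α * n ≤ (C.card : ℝ) := by
  set P := standardChain (ZMod 2) n
  obtain ⟨a, ha⟩ := exists_card_mul_le_card_mul_card_inter_image_add P S
  refine ⟨a, P ∩ S.image (· + a), inter_subset_right,
    isChain_standardChain.mono (coe_subset.mpr inter_subset_left), ?_⟩
  rw [card_standardChain, Fintype.card_fun, ZMod.card, Fintype.card_fin] at ha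
  have hcount : ((n : ℝ) + 1) * #S ≤ 2 ^ n * #(P ∩ S.image (· + a)) := by exact_mod_cast ha
  have hpos : (0 : ℝ) < 2 ^ n := by positivity
  refine le_of_mul_le_mul_left ?_ hpos
  calc 2 ^ n * (α * n) = n * (α * 2 ^ n) := by ring
    _ ≤ n * #S := by gcongr
    _ ≤ (n + 1) * #S := by gcongr; linarith
    _ ≤ 2 ^ n * #(P ∩ S.image (· + a)) := hcount

/-- if `0 < α ≤ 1` and `S ⊆ 𝔽₂ⁿ` has `|S| ≥ α 2ⁿ`, then some
translate `S + a` contains a chain `C` (in the coordinatewise partial order,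
`x ≤ y` iff the support of `x` is contained in that of `y`) with `|C| ≥ α n`. -/
theorem stmt17 (n : ℕ) (α : ℝ) (hα0 : 0 < α) (hα1 : α ≤ 1)
    (S : Finset (Fin n → ZMod 2)) (hS : α * 2 ^ n ≤ (S.card : ℝ)) :
    ∃ a : Fin n → ZMod 2, ∃ C : Finset (Fin n → ZMod 2),
      C ⊆ S.image (fun x => x + a) ∧
      IsChain (fun x y : Fin n → ZMod 2 => ∀ i, x i = 1 → y i = 1) (C : Set (Fin n → ZMod 2)) ∧
      α * n ≤ (C.card : ℝ) :=
  stmt17_general n α S hS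
end
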